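/- arXiv:2503.07626 — 7 statements merged into one kernel-verified Lean document; each statement's English description precedes it below -/
import Mathlib

section
/- For all m, m₁, m₂ ∈ SL(2,ℝ): (i) m⁻¹·γᵢ·m = Σⱼ O(m)ᵢⱼ·γⱼ for i = 1,2,3, i.e. conjugation by m preserves the real span of γ₁, γ₂, γ₃ with coefficient matrix O(m); (ii) O(m)·η·O(m)ᵀ = η, so O(m) lies in the orthogonal group of the nondegenerate symmetric bilinear form η of signature (2,1); (iii) O(m₁·m₂) = O(m₁)·O(m₂), i.e. O is a group homomorphism from SL(2,ℝ) to the η-orthogonal group O(1,2). -/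
/-!
The trace form `(X, Y) ↦ Tr(X·Y)` on traceless 2×2 matrices has Gram matrix `η` in the basis
`γ`, and `η² = 1`, so `O(m)` is the matrix of `X ↦ m⁻¹·X·m` in that basis. Conjugation by an
invertible `m` preserves the trace form, which is `O(m)·η·O(m)ᵀ = η`, and conjugation by `m₁·m₂`
is conjugation by `m₁` followed by `m₂`, which is `O(m₁·m₂) = O(m₁)·O(m₂)`.
-/

open Matrix

/-- The three gamma matrices `γ₁ = [[0,0],[1,0]]`, `γ₂ = (1/√2)·[[−1,0],[0,1]]`,
`γ₃ = [[0,1],[0,0]]`. -/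
noncomputable def gammaMat : Fin 3 → Matrix (Fin 2) (Fin 2) ℝ :=
  ![!![0, 0; 1, 0],
    (Real.sqrt 2)⁻¹ • !![-1, 0; 0, 1],
    !![0, 1; 0, 0]]

/-- The symmetric bilinear form `η = [[0,0,1],[0,1,0],[1,0,0]]` of signature `(2,1)`. -/
def etaMat : Matrix (Fin 3) (Fin 3) ℝ := !![0, 0, 1; 0, 1, 0; 1, 0, 0]

/-- The vector (adjoint) image `O(m)ᵢⱼ = Σₖ Tr(m⁻¹·γᵢ·m·γₖ)·ηₖⱼ` of `m ∈ SL(2,ℝ)`. -/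
noncomputable def Omat (m : Matrix (Fin 2) (Fin 2) ℝ) : Matrix (Fin 3) (Fin 3) ℝ :=
  Matrix.of fun i j => ∑ k : Fin 3, (m⁻¹ * gammaMat i * m * gammaMat k).trace * etaMat k j

open Finset

lemma trace_gammaMat (i : Fin 3) : (gammaMat i).trace = 0 := by
  fin_cases i <;> simp [gammaMat, trace_fin_two]

lemma trace_gammaMat_mul_gammaMat (i j : Fin 3) :
    (gammaMat i * gammaMat j).trace = etaMat i j := by
  fin_cases i <;> fin_cases j <;>
    norm_num [gammaMat, etaMat, trace_fin_two,
      TsirelsonInequality.sqrt_two_inv_mul_self]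

lemma etaMat_mul_self : etaMat * etaMat = 1 := by
  ext i j
  fin_cases i <;> fin_cases j <;> simp [etaMat, mul_apply, Fin.sum_univ_three]

/-- Coordinates of a traceless `X` in the basis `γ`: `η` is the inverse of the Gram matrix
`Tr(γₖ·γⱼ)`. -/
noncomputable def gammaCoord (X : Matrix (Fin 2) (Fin 2) ℝ) (j : Fin 3) : ℝ :=
  ∑ k, (X * gammaMat k).trace * etaMat k j

lemma Omat_apply (m : Matrix (Fin 2) (Fin 2) ℝ) (i j : Fin 3) :
    Omat m i j = gammaCoord (m⁻¹ * gammaMat i * m) j := rfl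

lemma gammaCoord_eq (X : Matrix (Fin 2) (Fin 2) ℝ) :
    gammaCoord X = ![X 1 0, (X 1 1 - X 0 0) * (√2)⁻¹, X 0 1] := by
  ext j
  fin_cases j <;>
    simp [gammaCoord, gammaMat, etaMat, trace_fin_two, mul_apply, Fin.sum_univ_two,
      Fin.sum_univ_three, sub_mul, neg_add_eq_sub]

lemma eq_sum_gammaCoord_smul (X : Matrix (Fin 2) (Fin 2) ℝ) (hX : X.trace = 0) :
    X = ∑ j, gammaCoord X j • gammaMat j := by
  rw [trace_fin_two] at hX
  ext a b
  fin_cases a <;> fin_cases b <;> simp [gammaCoord_eq, gammaMat, Fin.sum_univ_three]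
  · linear_combination (X 1 1 - X 0 0) * TsirelsonInequality.sqrt_two_inv_mul_self + hX / 2
  · linear_combination (X 0 0 - X 1 1) * TsirelsonInequality.sqrt_two_inv_mul_self + hX / 2

lemma gammaCoord_sum_smul {ι : Type*} (s : Finset ι) (c : ι → ℝ)
    (X : ι → Matrix (Fin 2) (Fin 2) ℝ) (j : Fin 3) :
    gammaCoord (∑ l ∈ s, c l • X l) j = ∑ l ∈ s, c l * gammaCoord (X l) j := by
  simp only [gammaCoord, sum_mul, trace_sum, smul_mul_assoc, trace_smul, smul_eq_mul, mul_sum]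
  rw [sum_comm]
  simp only [mul_assoc]

lemma sum_gammaCoord_mul_etaMat (X : Matrix (Fin 2) (Fin 2) ℝ) (k : Fin 3) :
    ∑ j, gammaCoord X j * etaMat j k = (X * gammaMat k).trace := by
  simp only [gammaCoord, sum_mul, mul_assoc]
  rw [sum_comm]
  simp only [← mul_sum, ← mul_apply, etaMat_mul_self, one_apply, mul_ite, mul_one, mul_zero,
    sum_ite_eq', mem_univ, if_true]

lemma trace_nonsing_inv_mul_mul_eq_zero (m A : Matrix (Fin 2) (Fin 2) ℝ) (hA : A.trace = 0) :
    (m⁻¹ * A * m).trace = 0 := by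
  by_cases hm : IsUnit m.det
  · rw [trace_mul_cycle, mul_nonsing_inv m hm, one_mul, hA]
  · rw [nonsing_inv_apply_not_isUnit m hm, zero_mul, zero_mul, trace_zero]

lemma nonsing_inv_mul_gammaMat_mul (m : Matrix (Fin 2) (Fin 2) ℝ) (i : Fin 3) :
    m⁻¹ * gammaMat i * m = ∑ j, Omat m i j • gammaMat j :=
  eq_sum_gammaCoord_smul _ (trace_nonsing_inv_mul_mul_eq_zero m _ (trace_gammaMat i))

lemma Omat_mul (m₁ m₂ : Matrix (Fin 2) (Fin 2) ℝ) : Omat (m₁ * m₂) = Omat m₁ * Omat m₂ := by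
  ext i j
  have hconj : (m₁ * m₂)⁻¹ * gammaMat i * (m₁ * m₂)
      = ∑ l, Omat m₁ i l • (m₂⁻¹ * gammaMat l * m₂) := by
    rw [Matrix.mul_inv_rev, ← mul_assoc, mul_assoc m₂⁻¹, mul_assoc m₂⁻¹,
      nonsing_inv_mul_gammaMat_mul, mul_sum, sum_mul]
    simp only [mul_smul_comm, smul_mul_assoc, mul_assoc]
  rw [Omat_apply, hconj, gammaCoord_sum_smul, mul_apply]
  rfl

lemma Omat_mul_etaMat_mul_transpose (m : Matrix (Fin 2) (Fin 2) ℝ) (hm : IsUnit m.det) :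
    Omat m * etaMat * (Omat m)ᵀ = etaMat := by
  ext i j
  calc (Omat m * etaMat * (Omat m)ᵀ) i j
      = ∑ k, (m⁻¹ * gammaMat i * m * gammaMat k).trace * Omat m j k := by
        simp only [mul_apply, transpose_apply, Omat_apply, sum_gammaCoord_mul_etaMat]
    _ = (m⁻¹ * gammaMat i * m * (m⁻¹ * gammaMat j * m)).trace := by
        rw [nonsing_inv_mul_gammaMat_mul m j, mul_sum, trace_sum]
        simp only [mul_smul_comm, trace_smul, smul_eq_mul, mul_comm]
    _ = etaMat i j := by
        have hcancel : m⁻¹ * gammaMat i * m * (m⁻¹ * gammaMat j * m)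
            = m⁻¹ * (gammaMat i * gammaMat j) * m := by
          simp only [mul_assoc, mul_nonsing_inv_cancel_left _ _ hm]
        rw [hcancel, trace_mul_cycle, mul_nonsing_inv m hm, one_mul, trace_gammaMat_mul_gammaMat]

theorem stmt_2_general (m m₁ m₂ : Matrix (Fin 2) (Fin 2) ℝ)
    (hm : m.det = 1) :
    (∀ i : Fin 3, m⁻¹ * gammaMat i * m = ∑ j : Fin 3, Omat m i j • gammaMat j) ∧
    Omat m * etaMat * (Omat m)ᵀ = etaMat ∧
    Omat (m₁ * m₂) = Omat m₁ * Omat m₂ :=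
  ⟨nonsing_inv_mul_gammaMat_mul m,
    Omat_mul_etaMat_mul_transpose m (hm ▸ isUnit_one), Omat_mul m₁ m₂⟩

/-- **The map `m ↦ O(m)` is a homomorphism `SL(2,ℝ) → O(1,2)`.**
For `m, m₁, m₂ ∈ SL(2,ℝ)`: (i) conjugation by `m` preserves the span of `γ₁, γ₂, γ₃` with
coefficient matrix `O(m)`; (ii) `O(m)·η·O(m)ᵀ = η`; (iii) `O(m₁·m₂) = O(m₁)·O(m₂)`. -/
theorem stmt_2 (m m₁ m₂ : Matrix (Fin 2) (Fin 2) ℝ)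
    (hm : m.det = 1) (hm₁ : m₁.det = 1) (hm₂ : m₂.det = 1) :
    (∀ i : Fin 3, m⁻¹ * gammaMat i * m = ∑ j : Fin 3, Omat m i j • gammaMat j) ∧
    Omat m * etaMat * (Omat m)ᵀ = etaMat ∧
    Omat (m₁ * m₂) = Omat m₁ * Omat m₂ :=
  stmt_2_general m m₁ m₂ hm
end

section
/- For m ∈ SL(2,ℝ), O(m) = I₃ if and only if m = I₂ or m = −I₂. Consequently, for m, m' ∈ SL(2,ℝ), O(m) = O(m') if and only if m' = m or m' = −m; thus the map m ↦ O(m) is exactly two-to-one, exhibiting SL(2,ℝ) as a double cover of its image in the η-orthogonal group O(1,2). -/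
open Matrix

/-!
Write `m = [[a, b], [c, d]]` with `ad - bc = 1`. Up to the factors `√2` and signs, the entries of
`O(m)` are `a², ab, b², ac, ad + bc, bd, c², cd, d²`; together with `ad - bc = 1` they determine
every product `mᵢⱼ mₖₗ`, and a vector over a domain is determined up to sign by its pairwise
products. Conversely `O(-m) = O(m)`, and `O(1) = 1` turns the first claim into the second.
-/

theorem eq_or_eq_neg_of_forall_mul_eq_mul {ι R : Type*} [CommRing R] [NoZeroDivisors R] {v w : ι → R}
    (h : ∀ i j, v i * v j = w i * w j) : w = v ∨ w = -v := by
  by_cases hv : v = 0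
  · left
    funext j
    simpa [hv, eq_comm] using h j j
  obtain ⟨i, hi⟩ := Function.ne_iff.mp hv
  rcases mul_self_eq_mul_self_iff.mp (h i i).symm with hwi | hwi
  · left
    funext j
    exact mul_left_cancel₀ hi (by rw [h i j, hwi])
  · right
    funext j
    rw [Pi.neg_apply]
    exact mul_left_cancel₀ hi (by linear_combination h i j + w j * hwi)

lemma Omat_neg {m : Matrix (Fin 2) (Fin 2) ℝ} (hm : IsUnit m.det) : Omat (-m) = Omat m := by
  have hinv : (-m)⁻¹ = -m⁻¹ :=
    Matrix.inv_eq_left_inv (by rw [neg_mul_neg, Matrix.nonsing_inv_mul m hm])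
  simp only [Omat, hinv, neg_mul, mul_neg, neg_neg]

lemma Omat_fin_two_of (a b c d : ℝ) (h : a * d - b * c = 1) :
    Omat !![a, b; c, d] = !![a ^ 2, √2 * (a * b), -b ^ 2;
                             √2 * (a * c), a * d + b * c, -(√2 * (b * d));
                             -c ^ 2, -(√2 * (c * d)), d ^ 2] := by
  have hinv : (!![a, b; c, d] : Matrix (Fin 2) (Fin 2) ℝ)⁻¹ = !![d, -b; -c, a] := by
    rw [Matrix.inv_def, Matrix.det_fin_two_of, h, Ring.inverse_one, one_smul,
      Matrix.adjugate_fin_two_of]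
  have h2 : √2 * √2 = 2 := Real.mul_self_sqrt (by norm_num)
  have hi : (√2)⁻¹ = √2 / 2 := by
    field_simp
    rw [Real.sq_sqrt (by norm_num : (0 : ℝ) ≤ 2)]
  ext i j
  fin_cases i <;> fin_cases j <;>
    simp [Omat, gammaMat, etaMat, hinv, hi, Fin.sum_univ_three, Matrix.trace_fin_two] <;>
    first | ring1 | linear_combination (a * d + b * c) / 2 * h2

lemma Omat_one : Omat 1 = 1 := by
  rw [Matrix.one_fin_two, Omat_fin_two_of 1 0 0 1 (by norm_num), Matrix.one_fin_three]
  norm_num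

lemma Omat_eq_Omat_iff {m m' : Matrix (Fin 2) (Fin 2) ℝ} (hm : m.det = 1) (hm' : m'.det = 1) :
    Omat m = Omat m' ↔ m' = m ∨ m' = -m := by
  refine ⟨fun h => ?_, ?_⟩
  · obtain ⟨a, b, c, d, rfl⟩ : ∃ a b c d, m = !![a, b; c, d] :=
      ⟨m 0 0, m 0 1, m 1 0, m 1 1, m.etaExpand_eq.symm⟩
    obtain ⟨a', b', c', d', rfl⟩ : ∃ a b c d, m' = !![a, b; c, d] :=
      ⟨m' 0 0, m' 0 1, m' 1 0, m' 1 1, m'.etaExpand_eq.symm⟩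
    rw [Matrix.det_fin_two_of] at hm hm'
    rw [Omat_fin_two_of a b c d hm, Omat_fin_two_of a' b' c' d' hm'] at h
    simp only [EmbeddingLike.apply_eq_iff_eq, Matrix.vecCons_inj, mul_eq_mul_left_iff,
      Nat.ofNat_nonneg, Real.sqrt_eq_zero, OfNat.ofNat_ne_zero, or_false, neg_inj, and_true] at h
    obtain ⟨⟨haa, hab, hbb⟩, ⟨hac, hs, hbd⟩, hcc, hcd, hdd⟩ := h
    have hprod : ∀ p q : Fin 2 × Fin 2,
        !![a, b; c, d] p.1 p.2 * !![a, b; c, d] q.1 q.2 =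
          !![a', b'; c', d'] p.1 p.2 * !![a', b'; c', d'] q.1 q.2 := by
      rintro ⟨i, j⟩ ⟨k, l⟩
      fin_cases i <;> fin_cases j <;> fin_cases k <;> fin_cases l <;> simp <;> linarith
    rcases eq_or_eq_neg_of_forall_mul_eq_mul hprod with h | h
    · exact .inl (Matrix.ext fun i j => congrFun h (i, j))
    · exact .inr (Matrix.ext fun i j => congrFun h (i, j))
  · rintro (rfl | rfl)
    · rfl
    · exact (Omat_neg (hm ▸ isUnit_one)).symm

/-- **`SL(2,ℝ)` is a double cover of its image in `O(1,2)`.**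
For `m ∈ SL(2,ℝ)`, `O(m) = I₃` iff `m = ±I₂`; consequently `O(m) = O(m')` iff `m' = ±m`,
so `m ↦ O(m)` is exactly two-to-one. -/
theorem stmt_3 (m m' : Matrix (Fin 2) (Fin 2) ℝ)
    (hm : m.det = 1) (hm' : m'.det = 1) :
    (Omat m = 1 ↔ m = 1 ∨ m = -1) ∧
    (Omat m = Omat m' ↔ m' = m ∨ m' = -m) := by
  refine ⟨?_, Omat_eq_Omat_iff hm hm'⟩
  rw [← Omat_one, eq_comm, Omat_eq_Omat_iff Matrix.det_one hm]
end

section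
/- Fix integers r ≥ 1 and s ≥ 1 and set N = 2r + 2s. Let η be the N×N real symmetric matrix with ηᵢⱼ = 1 when i + j = N + 1 and (i ≤ r or i ≥ r + 2s + 1), ηᵢᵢ = 1 when r + 1 ≤ i ≤ r + 2s, and all other entries 0 (this η has signature (r + 2s, r)). Then the set B = {X ∈ Mat(N×N, ℝ) : Xᵢⱼ = 0 whenever i > j, and Xᵀ·η + η·X = 0} of upper triangular matrices in so(r, r+2s) is a Lie subalgebra of gl(N, ℝ) (closed under the matrix commutator), it is a solvable Lie algebra, and its dimension as a real vector space equals r·(r + 2s), which is the dimension of the symmetric space SO(r, r+2s)/(SO(r)×SO(r+2s)). -/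
open Matrix

attribute [local instance 100] LieRing.ofAssociativeRing

/-- The `N×N` symmetric matrix `η` (with `N = 2r+2s`) of signature `(r+2s, r)`:
`ηᵢⱼ = 1` when `i + j = N + 1` and (`i ≤ r` or `i ≥ r + 2s + 1`); `ηᵢᵢ = 1` when
`r + 1 ≤ i ≤ r + 2s`; all other entries `0` (indices written `1`-based). -/
def etaRS (r s : ℕ) : Matrix (Fin (2 * r + 2 * s)) (Fin (2 * r + 2 * s)) ℝ :=
  Matrix.of fun i j =>
    if i.val + j.val + 1 = 2 * r + 2 * s ∧ (i.val < r ∨ r + 2 * s ≤ i.val) then 1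
    else if i = j ∧ r ≤ i.val ∧ i.val < r + 2 * s then 1
    else 0

/-!
`η` is the permutation matrix of the involution `σ` of `Fin N` that reverses the first and the
last `r` indices and fixes the middle `2s`, so `Xᵀη + ηX = 0` says `X a b = -X (σ b) (σ a)`:
`B` consists of the upper triangular matrices that are odd under the involution
`τ (a, b) = (σ b, σ a)` of positions. Upper triangular matrices form a solvable Lie algebra,
since the `k`-th derived algebra vanishes below the `k`-th superdiagonal. An odd matrix
vanishing below the diagonal is determined by, and may freely take, its entries at one
representative of each two-element `τ`-orbit with no point below the diagonal; the pairs
`(a, b)` with `a < r`, `b < r + 2s` index these orbits, through `(a, b)` when `a ≤ b` and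
`(b, σ a)` when `b < a`.
-/

open Function

namespace Matrix

variable (R : Type*) [CommRing R]

def upperBand (n k : ℕ) : Submodule R (Matrix (Fin n) (Fin n) R) where
  carrier := {X | ∀ i j : Fin n, (j : ℕ) < i + k → X i j = 0}
  add_mem' hX hY i j h := by rw [add_apply, hX i j h, hY i j h, add_zero]
  zero_mem' _ _ _ := rfl
  smul_mem' c _ hX i j h := by rw [smul_apply, hX i j h, smul_zero]

variable {R}

theorem mem_upperBand {n k : ℕ} {X : Matrix (Fin n) (Fin n) R} :
    X ∈ upperBand R n k ↔ ∀ i j : Fin n, (j : ℕ) < i + k → X i j = 0 :=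
  Iff.rfl

theorem upperBand_anti {n k l : ℕ} (h : k ≤ l) : upperBand R n l ≤ upperBand R n k :=
  fun _ hX i j hij => hX i j (by omega)

theorem upperBand_self (n : ℕ) : upperBand R n n = ⊥ :=
  eq_bot_iff.2 fun X hX => by
    rw [Submodule.mem_bot]
    ext i j
    exact hX i j (by omega)

theorem mul_mem_upperBand {n k l : ℕ} {X Y : Matrix (Fin n) (Fin n) R}
    (hX : X ∈ upperBand R n k) (hY : Y ∈ upperBand R n l) : X * Y ∈ upperBand R n (k + l) := by
  intro i j hij
  rw [mul_apply]
  refine Finset.sum_eq_zero fun m _ => ?_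
  by_cases hm : (m : ℕ) < i + k
  · rw [hX i m hm, zero_mul]
  · rw [hY m j (by omega), mul_zero]

theorem commutator_mem_upperBand_succ {n k : ℕ} {X Y : Matrix (Fin n) (Fin n) R}
    (hX : X ∈ upperBand R n k) (hY : Y ∈ upperBand R n k) :
    X * Y - Y * X ∈ upperBand R n (k + 1) := by
  rcases k with _ | k
  · intro i j hij
    rw [sub_apply, mul_apply, mul_apply, ← Finset.sum_sub_distrib]
    refine Finset.sum_eq_zero fun m _ => ?_
    -- only the term `m = i = j` survives, and there the diagonal entries commute
    rcases lt_or_ge (m : ℕ) i with hm | hm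
    · rw [hX i m (by omega), hY i m (by omega), zero_mul, zero_mul, sub_zero]
    rcases lt_or_ge (j : ℕ) m with hm' | hm'
    · rw [hX m j (by omega), hY m j (by omega), mul_zero, mul_zero, sub_zero]
    obtain rfl : m = i := Fin.ext (by omega)
    obtain rfl : j = m := Fin.ext (by omega)
    ring
  · exact sub_mem (upperBand_anti (by omega) (mul_mem_upperBand hX hY))
      (upperBand_anti (by omega) (mul_mem_upperBand hY hX))

variable (R) in
def upperTriangular (n : Type*) [Fintype n] [DecidableEq n] [LinearOrder n] :
    LieSubalgebra R (Matrix n n R) :=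
  lieSubalgebraOfSubalgebra R _ (blockTriangularSubalgebra R R id)

theorem mem_upperTriangular {n : Type*} [Fintype n] [DecidableEq n] [LinearOrder n]
    {X : Matrix n n R} : X ∈ upperTriangular R n ↔ X.IsUpperTriangular :=
  Iff.rfl

theorem upperTriangular_eq_upperBand_zero (n : ℕ) :
    (upperTriangular R (Fin n)).toSubmodule = upperBand R n 0 := by
  ext X
  simp only [LieSubalgebra.mem_toSubmodule, mem_upperTriangular, mem_upperBand, add_zero]
  exact ⟨fun h i j hij => h hij, fun h i j hij => h i j hij⟩

theorem derivedSeries_upperTriangular_le (n k : ℕ) :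
    (LieAlgebra.derivedSeries R (upperTriangular R (Fin n)) k).toSubmodule ≤
      (upperBand R n k).comap (upperTriangular R (Fin n)).toSubmodule.subtype := by
  induction k with
  | zero =>
    intro X _
    simp [← upperTriangular_eq_upperBand_zero]
  | succ k ih =>
    rw [LieAlgebra.derivedSeries_def, LieAlgebra.derivedSeriesOfIdeal_succ,
      LieSubmodule.lieIdeal_oper_eq_linear_span, Submodule.span_le]
    rintro _ ⟨X, Y, rfl⟩
    exact commutator_mem_upperBand_succ (ih X.2) (ih Y.2)

instance isSolvable_upperTriangular (n : ℕ) :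
    LieAlgebra.IsSolvable (upperTriangular R (Fin n)) := by
  refine (LieAlgebra.isSolvable_iff R _).2 ⟨n, eq_bot_iff.2 fun X hX => ?_⟩
  have := derivedSeries_upperTriangular_le n n hX
  rw [upperBand_self, Submodule.mem_comap, Submodule.mem_bot] at this
  exact (LieSubmodule.mem_bot X).2 (Subtype.ext this)

theorem isSkewAdjoint_toPEquiv_toMatrix_iff {n : Type*} [Fintype n] [DecidableEq n]
    (σ : Equiv.Perm n) (X : Matrix n n R) :
    σ.toPEquiv.toMatrix.IsSkewAdjoint X ↔ ∀ a b, X a b = -X (σ b) (σ a) := by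
  rw [Matrix.IsSkewAdjoint, Matrix.IsAdjointPair, PEquiv.mul_toMatrix_toPEquiv,
    PEquiv.toMatrix_toPEquiv_mul, ← Matrix.ext_iff]
  simp only [submatrix_apply, transpose_apply, id, neg_apply]
  exact ⟨fun h a b => by simpa using h b (σ a), fun h a b => by simpa using h (σ.symm b) a⟩

variable (R) in
def uncurryLinearEquiv (n : Type*) : Matrix n n R ≃ₗ[R] (n × n → R) :=
  (ofLinearEquiv R).symm.trans (LinearEquiv.curry R R n n).symm

end Matrix

section OddFunctions

variable (K : Type*) {P Q : Type*} [Field K]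

def oddVanishingOn (τ : P → P) (Z : Set P) : Submodule K (P → K) where
  carrier := {f | (∀ p, f (τ p) = -f p) ∧ ∀ p ∈ Z, f p = 0}
  add_mem' hf hg := ⟨fun p => by simp [hf.1 p, hg.1 p, add_comm],
    fun p hp => by simp [hf.2 p hp, hg.2 p hp]⟩
  zero_mem' := ⟨fun _ => by simp, fun _ _ => rfl⟩
  smul_mem' c f hf := ⟨fun p => by simp [hf.1 p], fun p hp => by simp [hf.2 p hp]⟩

variable {K}

theorem finrank_oddVanishingOn [CharZero K] [Fintype Q] {τ : P → P} (hτ : Involutive τ)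
    {Z : Set P} (ι : Q → P) (hι : Injective ι) (hτι : ∀ q q', τ (ι q) ≠ ι q')
    (hZ : ∀ q, ι q ∉ Z ∧ τ (ι q) ∉ Z)
    (hcover : ∀ p, p ∉ Z → τ p ∉ Z → τ p ≠ p → ∃ q, ι q = p ∨ ι q = τ p) :
    Module.finrank K (oddVanishingOn K τ Z) = Fintype.card Q := by
  let res : oddVanishingOn K τ Z →ₗ[K] Q → K :=
    LinearMap.funLeft K K ι ∘ₗ (oddVanishingOn K τ Z).subtype
  have h_inj : Injective res := by
    refine (injective_iff_map_eq_zero res).2 fun ⟨f, hf_odd, hf_Z⟩ hf => ?_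
    ext p
    show f p = 0
    have hf_ι : ∀ q, f (ι q) = 0 := congrFun hf
    have hf_τ : f p = -f (τ p) := by rw [hf_odd, neg_neg]
    by_cases hp : p ∈ Z
    · exact hf_Z p hp
    by_cases hτp : τ p ∈ Z
    · rw [hf_τ, hf_Z _ hτp, neg_zero]
    by_cases hfix : τ p = p
    · rwa [hfix, CharZero.eq_neg_self_iff] at hf_τ
    obtain ⟨q, rfl | hq⟩ := hcover p hp hτp hfix
    · exact hf_ι q
    · rw [hf_τ, ← hq, hf_ι, neg_zero]
  have h_surj : Surjective res := by
    intro g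
    let e : P → K := extend ι g 0
    have he_τι : ∀ q, e (τ (ι q)) = 0 := fun q =>
      extend_apply' _ _ _ fun ⟨q', hq'⟩ => hτι q q' hq'.symm
    refine ⟨⟨e - e ∘ τ, fun p => ?_, fun p hp => ?_⟩, funext fun q => ?_⟩
    · simp [hτ p]
    · have he : e p = 0 := extend_apply' _ _ _ fun ⟨q, hq⟩ => (hZ q).1 (hq ▸ hp)
      have he_τ : e (τ p) = 0 := extend_apply' _ _ _ fun ⟨q, hq⟩ =>
        (hZ q).2 (by rwa [hq, hτ p])
      simp [he, he_τ]
    · simp [res, LinearMap.funLeft_apply, e, hι.extend_apply, he_τι]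
  rw [(LinearEquiv.ofBijective res ⟨h_inj, h_surj⟩).finrank_eq,
    Module.finrank_fintype_fun_eq_card]

theorem map_upperTriangular_inf_skewAdjoint {n : Type*} [Fintype n] [DecidableEq n]
    [LinearOrder n] (σ : Equiv.Perm n) :
    (upperTriangular K n ⊓ skewAdjointMatricesLieSubalgebra σ.toPEquiv.toMatrix).toSubmodule.map
        (uncurryLinearEquiv K n : Matrix n n K →ₗ[K] n × n → K) =
      oddVanishingOn K (fun p : n × n => (σ p.2, σ p.1)) {p | p.2 < p.1} := by
  ext f
  simp only [Submodule.mem_map_equiv, LieSubalgebra.inf_toSubmodule, Submodule.mem_inf,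
    LieSubalgebra.mem_toSubmodule, mem_skewAdjointMatricesLieSubalgebra,
    mem_skewAdjointMatricesSubmodule, isSkewAdjoint_toPEquiv_toMatrix_iff]
  rw [and_comm]
  exact and_congr
    ⟨fun h p => (neg_eq_iff_eq_neg.2 (h p.1 p.2)).symm,
      fun h a b => (neg_eq_iff_eq_neg.2 (h (a, b))).symm⟩
    ⟨fun h p hp => h hp, fun h a b hab => h (a, b) hab⟩

end OddFunctions

def etaInvolution (r s : ℕ) (i : Fin (2 * r + 2 * s)) : Fin (2 * r + 2 * s) :=
  ⟨if (i : ℕ) < r ∨ r + 2 * s ≤ i then 2 * r + 2 * s - 1 - i else i, by split_ifs <;> omega⟩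

theorem etaInvolution_val (r s : ℕ) (i : Fin (2 * r + 2 * s)) :
    (etaInvolution r s i : ℕ) =
      if (i : ℕ) < r ∨ r + 2 * s ≤ i then 2 * r + 2 * s - 1 - i else i :=
  rfl

theorem etaInvolution_spec (r s : ℕ) (i : Fin (2 * r + 2 * s)) :
    (etaInvolution r s i : ℕ) + i + 1 = 2 * r + 2 * s ∧ ((i : ℕ) < r ∨ r + 2 * s ≤ i) ∨
      etaInvolution r s i = i ∧ r ≤ (i : ℕ) ∧ (i : ℕ) < r + 2 * s := by
  rw [Fin.ext_iff, etaInvolution_val]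
  split_ifs <;> omega

theorem etaInvolution_involutive (r s : ℕ) : Involutive (etaInvolution r s) :=
  fun i => Fin.ext (by simp only [etaInvolution_val]; split_ifs <;> omega)

theorem etaRS_eq_toMatrix (r s : ℕ) :
    etaRS r s = (etaInvolution_involutive r s).toPerm.toPEquiv.toMatrix := by
  ext i j
  rw [PEquiv.toMatrix_toPEquiv_apply, Pi.single_apply, Involutive.coe_toPerm]
  simp only [etaRS, of_apply, Fin.ext_iff, etaInvolution_val]
  split_ifs <;> first | rfl | (exfalso; omega)

def etaRep (r s : ℕ) (q : Fin r × Fin (r + 2 * s)) :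
    Fin (2 * r + 2 * s) × Fin (2 * r + 2 * s) :=
  (⟨if (q.1 : ℕ) ≤ q.2 then q.1 else q.2, by split_ifs <;> omega⟩,
    ⟨if (q.1 : ℕ) ≤ q.2 then q.2 else 2 * r + 2 * s - 1 - q.1, by split_ifs <;> omega⟩)

theorem etaRep_injective (r s : ℕ) : Injective (etaRep r s) := by
  rintro ⟨a, b⟩ ⟨c, d⟩ h
  simp only [etaRep, Prod.ext_iff, Fin.ext_iff] at h ⊢
  split_ifs at h <;> omega

theorem etaRep_not_lower (r s : ℕ) (q : Fin r × Fin (r + 2 * s)) :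
    (etaRep r s q).1 ≤ (etaRep r s q).2 ∧
      etaInvolution r s (etaRep r s q).2 ≤ etaInvolution r s (etaRep r s q).1 := by
  simp only [etaRep, Fin.le_def, etaInvolution_val]
  split_ifs <;> omega

theorem reflect_etaRep_ne_etaRep (r s : ℕ) (q q' : Fin r × Fin (r + 2 * s)) :
    (etaInvolution r s (etaRep r s q).2, etaInvolution r s (etaRep r s q).1) ≠ etaRep r s q' := by
  simp only [etaRep, ne_eq, Prod.ext_iff, Fin.ext_iff, etaInvolution_val]
  split_ifs <;> omega

theorem exists_etaRep_eq (r s : ℕ) {a b : Fin (2 * r + 2 * s)} (hab : a ≤ b)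
    (hσ : etaInvolution r s b ≤ etaInvolution r s a)
    (hfix : (etaInvolution r s b, etaInvolution r s a) ≠ (a, b)) :
    ∃ q, etaRep r s q = (a, b) ∨ etaRep r s q = (etaInvolution r s b, etaInvolution r s a) := by
  have hA := etaInvolution_spec r s a
  have hB := etaInvolution_spec r s b
  rw [Fin.le_def] at hab hσ
  simp only [ne_eq, Prod.ext_iff, Fin.ext_iff] at hfix
  rcases lt_or_ge (a : ℕ) r with ha | ha
  · rcases lt_or_ge (b : ℕ) (r + 2 * s) with hb | hb
    · exact ⟨(⟨a, ha⟩, ⟨b, hb⟩), Or.inl (by simp [etaRep, hab])⟩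
    rcases lt_or_ge ((a : ℕ) + b + 1) (2 * r + 2 * s) with hab' | hab'
    · refine ⟨(⟨2 * r + 2 * s - 1 - b, by omega⟩, ⟨a, by omega⟩), Or.inl ?_⟩
      simp only [etaRep, Prod.ext_iff, Fin.ext_iff]
      split_ifs <;> omega
    · refine ⟨(⟨a, ha⟩, ⟨2 * r + 2 * s - 1 - b, by omega⟩), Or.inr ?_⟩
      simp only [etaRep, Prod.ext_iff, Fin.ext_iff]
      split_ifs <;> omega
  rcases lt_or_ge (a : ℕ) (r + 2 * s) with ha' | ha'
  · refine ⟨(⟨2 * r + 2 * s - 1 - b, by omega⟩, ⟨a, ha'⟩), Or.inr ?_⟩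
    simp only [etaRep, Prod.ext_iff, Fin.ext_iff]
    split_ifs <;> omega
  · refine ⟨(⟨2 * r + 2 * s - 1 - b, by omega⟩, ⟨2 * r + 2 * s - 1 - a, by omega⟩), Or.inr ?_⟩
    simp only [etaRep, Prod.ext_iff, Fin.ext_iff]
    split_ifs <;> omega

theorem finrank_upperTriangular_inf_skewAdjoint_etaRS (r s : ℕ) :
    Module.finrank ℝ
      ↥(upperTriangular ℝ (Fin (2 * r + 2 * s)) ⊓ skewAdjointMatricesLieSubalgebra (etaRS r s)) =
      r * (r + 2 * s) := by
  have hσ := etaInvolution_involutive r s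
  rw [etaRS_eq_toMatrix]
  change Module.finrank ℝ (LieSubalgebra.toSubmodule _) = _
  rw [← LinearEquiv.finrank_map_eq (uncurryLinearEquiv ℝ _), map_upperTriangular_inf_skewAdjoint,
    finrank_oddVanishingOn (fun p => Prod.ext (hσ _) (hσ _)) (etaRep r s) (etaRep_injective r s)
      (reflect_etaRep_ne_etaRep r s) (fun q => ?_) (fun p hp hτp hfix => ?_),
    Fintype.card_prod, Fintype.card_fin, Fintype.card_fin]
  · simpa [not_lt] using etaRep_not_lower r s q
  · simp only [Set.mem_ofPred_eq, not_lt] at hp hτp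
    exact exists_etaRep_eq r s hp hτp hfix

theorem stmt_6_general (r s : ℕ) :
    ∃ B : LieSubalgebra ℝ (Matrix (Fin (2 * r + 2 * s)) (Fin (2 * r + 2 * s)) ℝ),
      (B : Set (Matrix (Fin (2 * r + 2 * s)) (Fin (2 * r + 2 * s)) ℝ)) =
        {X | (∀ i j, j < i → X i j = 0) ∧ Xᵀ * etaRS r s + etaRS r s * X = 0} ∧
      LieAlgebra.IsSolvable B ∧
      Module.finrank ℝ B = r * (r + 2 * s) := by
  refine ⟨upperTriangular ℝ _ ⊓ skewAdjointMatricesLieSubalgebra (etaRS r s), ?_,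
    (LieSubalgebra.inclusion_injective inf_le_left).lieAlgebra_isSolvable,
    finrank_upperTriangular_inf_skewAdjoint_etaRS r s⟩
  ext X
  rw [LieSubalgebra.coe_inf, Set.mem_inter_iff, SetLike.mem_coe, SetLike.mem_coe,
    mem_skewAdjointMatricesLieSubalgebra, mem_skewAdjointMatricesSubmodule, Matrix.IsSkewAdjoint,
    Matrix.IsAdjointPair, mul_neg, eq_neg_iff_add_eq_zero]
  exact Iff.rfl

/-- **The solvable Lie algebra of the symmetric space `SO(r,r+2s)/(SO(r)×SO(r+2s))`.**
The set of upper triangular matrices `X` with `Xᵀ·η + η·X = 0` is a Lie subalgebra of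
`gl(2r+2s, ℝ)`, it is solvable, and its dimension is `r·(r+2s)`, the dimension of the
symmetric space. -/
theorem stmt_6 (r s : ℕ) (hr : 1 ≤ r) (hs : 1 ≤ s) :
    ∃ B : LieSubalgebra ℝ (Matrix (Fin (2 * r + 2 * s)) (Fin (2 * r + 2 * s)) ℝ),
      (B : Set (Matrix (Fin (2 * r + 2 * s)) (Fin (2 * r + 2 * s)) ℝ)) =
        {X | (∀ i j, j < i → X i j = 0) ∧ Xᵀ * etaRS r s + etaRS r s * X = 0} ∧
      LieAlgebra.IsSolvable B ∧
      Module.finrank ℝ B = r * (r + 2 * s) :=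
  stmt_6_general r s
end

section
/- The integer matrices Q₁, Q₂, T₃, T₄ all belong to Sp(4,ℤ); Q₁⁴ = Q₂⁴ = I₄; Q₁·T₃·Q₁³ = T₃⁻¹ and Q₂·T₄·Q₂³ = T₄⁻¹ (i.e. conjugation by Q₁ sends T₃ to its inverse and conjugation by Q₂ sends T₄ to its inverse); and moreover T₃·T₄·T₃⁻¹·T₄⁻¹ = T₁⁻² and T₃·T₄ᵀ·T₃⁻¹·(T₄ᵀ)⁻¹ = T₂⁻². In particular the inverse of each of T₃, T₄, T₁, T₂ is expressible as a word in the generators Q₁, Q₂, T₁, T₂, T₃, T₄. -/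
open Matrix

/-- The symplectic form `Ω = [[0, I₂], [−I₂, 0]]`. -/
def OmegaZ : Matrix (Fin 4) (Fin 4) ℤ :=
  !![0, 0, 1, 0; 0, 0, 0, 1; -1, 0, 0, 0; 0, -1, 0, 0]

/-- `T₁ = I₄ + E₁₃`. -/
def T₁ : Matrix (Fin 4) (Fin 4) ℤ := !![1, 0, 1, 0; 0, 1, 0, 0; 0, 0, 1, 0; 0, 0, 0, 1]

/-- `T₂ = I₄ + E₂₄`. -/
def T₂ : Matrix (Fin 4) (Fin 4) ℤ := !![1, 0, 0, 0; 0, 1, 0, 1; 0, 0, 1, 0; 0, 0, 0, 1]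

/-- `T₃ = I₄ + E₁₄ + E₂₃`. -/
def T₃ : Matrix (Fin 4) (Fin 4) ℤ := !![1, 0, 0, 1; 0, 1, 1, 0; 0, 0, 1, 0; 0, 0, 0, 1]

/-- `T₄ = I₄ + E₁₂ − E₄₃`. -/
def T₄ : Matrix (Fin 4) (Fin 4) ℤ := !![1, 1, 0, 0; 0, 1, 0, 0; 0, 0, 1, 0; 0, 0, -1, 1]

/-- The elliptic generator `Q₁`. -/
def Q₁ : Matrix (Fin 4) (Fin 4) ℤ := !![0, -1, 0, 0; 1, 0, 0, 0; 0, 0, 0, -1; 0, 0, 1, 0]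

/-- The elliptic generator `Q₂`. -/
def Q₂ : Matrix (Fin 4) (Fin 4) ℤ := !![0, 0, 0, 1; 0, 0, 1, 0; 0, -1, 0, 0; -1, 0, 0, 0]

/-- **Inverses of the parabolic generators as words.**
`Q₁, Q₂, T₃, T₄ ∈ Sp(4,ℤ)`; `Q₁⁴ = Q₂⁴ = I₄`; `Q₁·T₃·Q₁³ = T₃⁻¹` and `Q₂·T₄·Q₂³ = T₄⁻¹`;
`T₃·T₄·T₃⁻¹·T₄⁻¹ = T₁⁻²` and `T₃·T₄ᵀ·T₃⁻¹·(T₄ᵀ)⁻¹ = T₂⁻²`.  In particular the inverse of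
each of `T₁, T₂, T₃, T₄` is a word in the generators `Q₁, Q₂, T₁, T₂, T₃, T₄`. -/
theorem stmt_12 :
    Q₁ᵀ * OmegaZ * Q₁ = OmegaZ ∧ Q₂ᵀ * OmegaZ * Q₂ = OmegaZ ∧
    T₃ᵀ * OmegaZ * T₃ = OmegaZ ∧ T₄ᵀ * OmegaZ * T₄ = OmegaZ ∧
    Q₁ ^ 4 = 1 ∧ Q₂ ^ 4 = 1 ∧
    Q₁ * T₃ * Q₁ ^ 3 = T₃⁻¹ ∧ Q₂ * T₄ * Q₂ ^ 3 = T₄⁻¹ ∧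
    T₃ * T₄ * T₃⁻¹ * T₄⁻¹ = T₁⁻¹ ^ 2 ∧
    T₃ * T₄ᵀ * T₃⁻¹ * (T₄ᵀ)⁻¹ = T₂⁻¹ ^ 2 ∧
    T₁⁻¹ ∈ Submonoid.closure ({Q₁, Q₂, T₁, T₂, T₃, T₄} : Set (Matrix (Fin 4) (Fin 4) ℤ)) ∧
    T₂⁻¹ ∈ Submonoid.closure ({Q₁, Q₂, T₁, T₂, T₃, T₄} : Set (Matrix (Fin 4) (Fin 4) ℤ)) ∧
    T₃⁻¹ ∈ Submonoid.closure ({Q₁, Q₂, T₁, T₂, T₃, T₄} : Set (Matrix (Fin 4) (Fin 4) ℤ)) ∧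
    T₄⁻¹ ∈ Submonoid.closure ({Q₁, Q₂, T₁, T₂, T₃, T₄} : Set (Matrix (Fin 4) (Fin 4) ℤ)) := by

  have h3 : T₃⁻¹ = !![1,0,0,-1; 0,1,-1,0; 0,0,1,0; 0,0,0,1] := by
    apply Matrix.inv_eq_left_inv; decide
  have h4 : T₄⁻¹ = !![1,-1,0,0; 0,1,0,0; 0,0,1,0; 0,0,1,1] := by
    apply Matrix.inv_eq_left_inv; decide
  have h1 : T₁⁻¹ = !![1,0,-1,0; 0,1,0,0; 0,0,1,0; 0,0,0,1] := by
    apply Matrix.inv_eq_left_inv; decide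
  have h2 : T₂⁻¹ = !![1,0,0,0; 0,1,0,-1; 0,0,1,0; 0,0,0,1] := by
    apply Matrix.inv_eq_left_inv; decide
  have h4t : (T₄ᵀ)⁻¹ = !![1,0,0,0; -1,1,0,0; 0,0,1,1; 0,0,0,1] := by
    apply Matrix.inv_eq_left_inv; decide
  have mem : ∀ M ∈ ({Q₁, Q₂, T₁, T₂, T₃, T₄} : Set (Matrix (Fin 4) (Fin 4) ℤ)),
      M ∈ Submonoid.closure ({Q₁, Q₂, T₁, T₂, T₃, T₄} : Set (Matrix (Fin 4) (Fin 4) ℤ)) :=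
    fun M hM => Submonoid.subset_closure hM
  have hQ1 := mem Q₁ (by simp)
  have hQ2 := mem Q₂ (by simp)
  have hT1 := mem T₁ (by simp)
  have hT2 := mem T₂ (by simp)
  have hT3 := mem T₃ (by simp)
  have hT4 := mem T₄ (by simp)
  refine ⟨by decide, by decide, by decide, by decide, by decide, by decide,
      ?_, ?_, ?_, ?_, ?_, ?_, ?_, ?_⟩
  · rw [h3]; decide
  · rw [h4]; decide
  · rw [h3, h4, h1]; decide
  · rw [h3, h4t, h2]; decide
  · have : T₁⁻¹ = Q₁ * T₂ * (T₃ * (Q₁ * (Q₂ * (T₄ * (Q₂ * (T₃ * T₄)))))) := by rw [h1]; decide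
    rw [this]
    exact mul_mem (mul_mem hQ1 hT2) (mul_mem hT3 (mul_mem hQ1 (mul_mem hQ2
      (mul_mem hT4 (mul_mem hQ2 (mul_mem hT3 hT4))))))
  · have : T₂⁻¹ = Q₁ * Q₂ * (T₄ * (Q₂ * (T₁ * (T₃ * (T₄ * (Q₁ * T₃)))))) := by rw [h2]; decide
    rw [this]
    exact mul_mem (mul_mem hQ1 hQ2) (mul_mem hT4 (mul_mem hQ2 (mul_mem hT1
      (mul_mem hT3 (mul_mem hT4 (mul_mem hQ1 hT3))))))
  · have : T₃⁻¹ = Q₁ * Q₁ * (Q₁ * (T₃ * Q₁)) := by rw [h3]; decide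
    rw [this]
    exact mul_mem (mul_mem hQ1 hQ1) (mul_mem hQ1 (mul_mem hT3 hQ1))
  · have : T₄⁻¹ = Q₁ * Q₁ * (Q₂ * (T₄ * Q₂)) := by rw [h4]; decide
    rw [this]
    exact mul_mem (mul_mem hQ1 hQ1) (mul_mem hQ2 (mul_mem hT4 hQ2))
end

section
/- The matrices A and B belong to Sp(4,ℤ) and satisfy A⁸ = B⁴ = (B·A)⁴ = I₄; moreover A⁴ = −I₄ ≠ I₄, B² = −I₄ ≠ I₄, and (B·A)² ≠ I₄, so A has order exactly 8, B has order exactly 4, and B·A has order exactly 4. -/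
open Matrix

/-- The generator `𝒜` of the elliptic point group `𝔓₃₂`. -/
def Amat : Matrix (Fin 4) (Fin 4) ℤ :=
  !![0, -1, 0, 0; 0, 0, 1, 0; 0, 0, 0, -1; -1, 0, 0, 0]

/-- The generator `ℬ` of the elliptic point group `𝔓₃₂`. -/
def Bmat : Matrix (Fin 4) (Fin 4) ℤ :=
  !![0, 0, 0, -1; 0, 0, -1, 0; 0, 1, 0, 0; 1, 0, 0, 0]

lemma hA4 : Amat ^ 4 = -1 := by
  show Amat ^ (2 * 2) = -1
  rw [pow_mul, sq, sq]
  ext i j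
  fin_cases i <;> fin_cases j <;>
    simp [Amat, Matrix.mul_apply, Fin.sum_univ_four, Matrix.one_apply,
      Matrix.vecHead, Matrix.vecTail]

lemma hB2 : Bmat ^ 2 = -1 := by
  rw [sq]
  ext i j
  fin_cases i <;> fin_cases j <;>
    simp [Bmat, Matrix.mul_apply, Fin.sum_univ_four, Matrix.one_apply,
      Matrix.vecHead, Matrix.vecTail]

lemma hBA2 : (Bmat * Amat) ^ 2 = !![1,0,0,0; 0,-1,0,0; 0,0,1,0; 0,0,0,-1] := by
  rw [sq]
  ext i j
  fin_cases i <;> fin_cases j <;>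
    simp [Amat, Bmat, Matrix.mul_apply, Fin.sum_univ_four,
      Matrix.vecHead, Matrix.vecTail]

lemma hne : (-1 : Matrix (Fin 4) (Fin 4) ℤ) ≠ 1 := by
  intro h
  have := congrFun (congrFun h 0) 0
  simp [Matrix.one_apply, Matrix.neg_apply] at this

lemma hBA2ne : (Bmat * Amat) ^ 2 ≠ 1 := by
  rw [hBA2]
  intro h
  have := congrFun (congrFun h 1) 1
  simp [Matrix.one_apply, Matrix.vecHead, Matrix.vecTail] at this

lemma hA8 : Amat ^ 8 = 1 := by
  rw [show (8 : ℕ) = 4 * 2 from rfl, pow_mul, hA4]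
  simp

lemma hB4 : Bmat ^ 4 = 1 := by
  show Bmat ^ (2 * 2) = 1
  rw [pow_mul, hB2]
  simp

lemma hBA4 : (Bmat * Amat) ^ 4 = 1 := by
  show (Bmat * Amat) ^ (2 * 2) = 1
  rw [pow_mul, hBA2, sq]
  ext i j
  fin_cases i <;> fin_cases j <;>
    simp [Matrix.mul_apply, Fin.sum_univ_four, Matrix.one_apply,
      Matrix.vecHead, Matrix.vecTail]

lemma hsymA : Amatᵀ * OmegaZ * Amat = OmegaZ := by
  ext i j
  fin_cases i <;> fin_cases j <;>
    simp [Amat, OmegaZ, Matrix.mul_apply, Fin.sum_univ_four,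
      Matrix.transpose_apply, Matrix.vecHead, Matrix.vecTail]

lemma hsymB : Bmatᵀ * OmegaZ * Bmat = OmegaZ := by
  ext i j
  fin_cases i <;> fin_cases j <;>
    simp [Bmat, OmegaZ, Matrix.mul_apply, Fin.sum_univ_four,
      Matrix.transpose_apply, Matrix.vecHead, Matrix.vecTail]

/-- **Orders of the generators `𝒜, ℬ` of `𝔓₃₂ ⊂ Sp(4,ℤ)`.**
`A, B ∈ Sp(4,ℤ)`, `A⁸ = B⁴ = (BA)⁴ = I₄`, `A⁴ = −I₄ ≠ I₄`, `B² = −I₄ ≠ I₄`,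
`(BA)² ≠ I₄`; so `A` has order exactly `8`, `B` order `4` and `BA` order `4`. -/
theorem stmt_14 :
    Amatᵀ * OmegaZ * Amat = OmegaZ ∧ Bmatᵀ * OmegaZ * Bmat = OmegaZ ∧
    Amat ^ 8 = 1 ∧ Bmat ^ 4 = 1 ∧ (Bmat * Amat) ^ 4 = 1 ∧
    Amat ^ 4 = -1 ∧ Bmat ^ 2 = -1 ∧
    (-1 : Matrix (Fin 4) (Fin 4) ℤ) ≠ 1 ∧
    (Bmat * Amat) ^ 2 ≠ 1 ∧
    orderOf Amat = 8 ∧ orderOf Bmat = 4 ∧ orderOf (Bmat * Amat) = 4 := by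
  have hA4ne : Amat ^ 4 ≠ 1 := by rw [hA4]; exact hne
  have hB2ne : Bmat ^ 2 ≠ 1 := by rw [hB2]; exact hne
  refine ⟨hsymA, hsymB, hA8, hB4, hBA4, hA4, hB2, hne, hBA2ne, ?_, ?_, ?_⟩
  · show _ = 2 ^ 3
    exact orderOf_eq_prime_pow (by simpa using hA4ne) (by simpa using hA8)
  · show _ = 2 ^ 2
    exact orderOf_eq_prime_pow (by simpa using hB2ne) (by simpa using hB4)
  · show _ = 2 ^ 2
    exact orderOf_eq_prime_pow (by simpa using hBA2ne) (by simpa using hBA4)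
end

section
/- The matrices S₁, S₂, Q₁, Q₂ all belong to Sp(4,ℤ), and the subgroup of GL(4,ℤ) generated by {S₁, S₂, Q₁, Q₂} is finite of order exactly 32 (the elliptic point group 𝔓₃₂ of the discrete group Δ₍₃₂,₈₎ ⊂ Sp(4,ℤ)). -/
open Matrix




open Matrix

/-- The elliptic generator `S₁`. -/
def S₁ : Matrix (Fin 4) (Fin 4) ℤ := !![0, 0, 1, 0; 0, 1, 0, 0; -1, 0, 0, 0; 0, 0, 0, 1]

/-- The elliptic generator `S₂`. -/
def S₂ : Matrix (Fin 4) (Fin 4) ℤ := !![1, 0, 0, 0; 0, 0, 0, 1; 0, 0, 1, 0; 0, -1, 0, 0]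


def E0 : Matrix (Fin 4) (Fin 4) ℤ := !![1, 0, 0, 0; 0, 1, 0, 0; 0, 0, 1, 0; 0, 0, 0, 1]
def E1 : Matrix (Fin 4) (Fin 4) ℤ := !![0, 0, 1, 0; 0, 1, 0, 0; -1, 0, 0, 0; 0, 0, 0, 1]
def E2 : Matrix (Fin 4) (Fin 4) ℤ := !![1, 0, 0, 0; 0, 0, 0, 1; 0, 0, 1, 0; 0, -1, 0, 0]
def E3 : Matrix (Fin 4) (Fin 4) ℤ := !![0, -1, 0, 0; 1, 0, 0, 0; 0, 0, 0, -1; 0, 0, 1, 0]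
def E4 : Matrix (Fin 4) (Fin 4) ℤ := !![0, 0, 0, 1; 0, 0, 1, 0; 0, -1, 0, 0; -1, 0, 0, 0]
def E5 : Matrix (Fin 4) (Fin 4) ℤ := !![-1, 0, 0, 0; 0, 1, 0, 0; 0, 0, -1, 0; 0, 0, 0, 1]
def E6 : Matrix (Fin 4) (Fin 4) ℤ := !![0, 0, 1, 0; 0, 0, 0, 1; -1, 0, 0, 0; 0, -1, 0, 0]
def E7 : Matrix (Fin 4) (Fin 4) ℤ := !![0, 0, 0, -1; 1, 0, 0, 0; 0, 1, 0, 0; 0, 0, 1, 0]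
def E8 : Matrix (Fin 4) (Fin 4) ℤ := !![0, -1, 0, 0; 0, 0, 1, 0; 0, 0, 0, -1; -1, 0, 0, 0]
def E9 : Matrix (Fin 4) (Fin 4) ℤ := !![1, 0, 0, 0; 0, -1, 0, 0; 0, 0, 1, 0; 0, 0, 0, -1]
def E10 : Matrix (Fin 4) (Fin 4) ℤ := !![0, 0, 0, 1; -1, 0, 0, 0; 0, -1, 0, 0; 0, 0, -1, 0]
def E11 : Matrix (Fin 4) (Fin 4) ℤ := !![-1, 0, 0, 0; 0, -1, 0, 0; 0, 0, -1, 0; 0, 0, 0, -1]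
def E12 : Matrix (Fin 4) (Fin 4) ℤ := !![0, 0, -1, 0; 0, 0, 0, 1; 1, 0, 0, 0; 0, -1, 0, 0]
def E13 : Matrix (Fin 4) (Fin 4) ℤ := !![0, 0, 1, 0; 0, 0, 0, -1; -1, 0, 0, 0; 0, 1, 0, 0]
def E14 : Matrix (Fin 4) (Fin 4) ℤ := !![0, 0, -1, 0; 0, 1, 0, 0; 1, 0, 0, 0; 0, 0, 0, 1]
def E15 : Matrix (Fin 4) (Fin 4) ℤ := !![-1, 0, 0, 0; 0, 0, 0, 1; 0, 0, -1, 0; 0, -1, 0, 0]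
def E16 : Matrix (Fin 4) (Fin 4) ℤ := !![0, 1, 0, 0; 1, 0, 0, 0; 0, 0, 0, 1; 0, 0, 1, 0]
def E17 : Matrix (Fin 4) (Fin 4) ℤ := !![0, 0, 0, -1; 0, 0, 1, 0; 0, 1, 0, 0; -1, 0, 0, 0]
def E18 : Matrix (Fin 4) (Fin 4) ℤ := !![0, 0, 1, 0; 0, -1, 0, 0; -1, 0, 0, 0; 0, 0, 0, -1]
def E19 : Matrix (Fin 4) (Fin 4) ℤ := !![0, -1, 0, 0; -1, 0, 0, 0; 0, 0, 0, -1; 0, 0, -1, 0]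
def E20 : Matrix (Fin 4) (Fin 4) ℤ := !![0, 0, -1, 0; 0, -1, 0, 0; 1, 0, 0, 0; 0, 0, 0, -1]
def E21 : Matrix (Fin 4) (Fin 4) ℤ := !![-1, 0, 0, 0; 0, 0, 0, -1; 0, 0, -1, 0; 0, 1, 0, 0]
def E22 : Matrix (Fin 4) (Fin 4) ℤ := !![1, 0, 0, 0; 0, 0, 0, -1; 0, 0, 1, 0; 0, 1, 0, 0]
def E23 : Matrix (Fin 4) (Fin 4) ℤ := !![0, 0, 0, 1; 0, 0, -1, 0; 0, -1, 0, 0; 1, 0, 0, 0]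
def E24 : Matrix (Fin 4) (Fin 4) ℤ := !![0, 1, 0, 0; -1, 0, 0, 0; 0, 0, 0, 1; 0, 0, -1, 0]
def E25 : Matrix (Fin 4) (Fin 4) ℤ := !![0, 0, 0, -1; 0, 0, -1, 0; 0, 1, 0, 0; 1, 0, 0, 0]
def E26 : Matrix (Fin 4) (Fin 4) ℤ := !![0, 0, 0, 1; 1, 0, 0, 0; 0, -1, 0, 0; 0, 0, 1, 0]
def E27 : Matrix (Fin 4) (Fin 4) ℤ := !![0, 1, 0, 0; 0, 0, 1, 0; 0, 0, 0, 1; -1, 0, 0, 0]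
def E28 : Matrix (Fin 4) (Fin 4) ℤ := !![0, 0, 0, -1; -1, 0, 0, 0; 0, 1, 0, 0; 0, 0, -1, 0]
def E29 : Matrix (Fin 4) (Fin 4) ℤ := !![0, 0, -1, 0; 0, 0, 0, -1; 1, 0, 0, 0; 0, 1, 0, 0]
def E30 : Matrix (Fin 4) (Fin 4) ℤ := !![0, -1, 0, 0; 0, 0, -1, 0; 0, 0, 0, -1; 1, 0, 0, 0]
def E31 : Matrix (Fin 4) (Fin 4) ℤ := !![0, 1, 0, 0; 0, 0, -1, 0; 0, 0, 0, 1; 1, 0, 0, 0]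

def GL32 : List (Matrix (Fin 4) (Fin 4) ℤ) := [E0, E1, E2, E3, E4, E5, E6, E7, E8, E9, E10, E11, E12, E13, E14, E15, E16, E17, E18, E19, E20, E21, E22, E23, E24, E25, E26, E27, E28, E29, E30, E31]


set_option maxHeartbeats 2000000 in
lemma step_S1 : ∀ y ∈ GL32, S₁ * y ∈ GL32 := by decide
set_option maxHeartbeats 2000000 in
lemma step_S2 : ∀ y ∈ GL32, S₂ * y ∈ GL32 := by decide
set_option maxHeartbeats 2000000 in
lemma step_Q1 : ∀ y ∈ GL32, Q₁ * y ∈ GL32 := by decide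
set_option maxHeartbeats 2000000 in
lemma step_Q2 : ∀ y ∈ GL32, Q₂ * y ∈ GL32 := by decide

lemma mem_GL32_of_mem_closure :
    ∀ x ∈ Submonoid.closure ({S₁, S₂, Q₁, Q₂} : Set (Matrix (Fin 4) (Fin 4) ℤ)), x ∈ GL32 := by
  intro x hx
  induction hx using Submonoid.closure_induction_left with
  | one => decide
  | mul_left g hg y hy ih =>
    rcases hg with rfl | rfl | rfl | rfl
    · exact step_S1 y ih
    · exact step_S2 y ih
    · exact step_Q1 y ih
    · exact step_Q2 y ih

lemma mem_closure_of_mem_GL32 :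
    ∀ x ∈ GL32, x ∈ Submonoid.closure ({S₁, S₂, Q₁, Q₂} : Set (Matrix (Fin 4) (Fin 4) ℤ)) := by
  intro x hx
  set C := Submonoid.closure ({S₁, S₂, Q₁, Q₂} : Set (Matrix (Fin 4) (Fin 4) ℤ)) with hC
  have hS1 : S₁ ∈ C := Submonoid.subset_closure (Set.mem_insert _ _)
  have hS2 : S₂ ∈ C := Submonoid.subset_closure (Set.mem_insert_of_mem _ (Set.mem_insert _ _))
  have hQ1 : Q₁ ∈ C := Submonoid.subset_closure
    (Set.mem_insert_of_mem _ (Set.mem_insert_of_mem _ (Set.mem_insert _ _)))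
  have hQ2 : Q₂ ∈ C := Submonoid.subset_closure
    (Set.mem_insert_of_mem _ (Set.mem_insert_of_mem _ (Set.mem_insert_of_mem _ rfl)))

  have hE0 : E0 ∈ C := (by decide : (1 : Matrix (Fin 4) (Fin 4) ℤ) = E0) ▸ C.one_mem
  have hE1 : E1 ∈ C := (by decide : S₁ = E1) ▸ hS1
  have hE2 : E2 ∈ C := (by decide : S₂ = E2) ▸ hS2
  have hE3 : E3 ∈ C := (by decide : Q₁ = E3) ▸ hQ1
  have hE4 : E4 ∈ C := (by decide : Q₂ = E4) ▸ hQ2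
  have hE5 : E5 ∈ C := (by decide : S₁ * S₁ = E5) ▸ (mul_mem hS1 hS1)
  have hE6 : E6 ∈ C := (by decide : S₁ * S₂ = E6) ▸ (mul_mem hS1 hS2)
  have hE7 : E7 ∈ C := (by decide : S₁ * Q₁ = E7) ▸ (mul_mem hS1 hQ1)
  have hE8 : E8 ∈ C := (by decide : S₁ * Q₂ = E8) ▸ (mul_mem hS1 hQ2)
  have hE9 : E9 ∈ C := (by decide : S₂ * S₂ = E9) ▸ (mul_mem hS2 hS2)
  have hE10 : E10 ∈ C := (by decide : S₂ * Q₂ = E10) ▸ (mul_mem hS2 hQ2)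
  have hE11 : E11 ∈ C := (by decide : Q₁ * Q₁ = E11) ▸ (mul_mem hQ1 hQ1)
  have hE12 : E12 ∈ C := (by decide : Q₁ * Q₂ = E12) ▸ (mul_mem hQ1 hQ2)
  have hE13 : E13 ∈ C := (by decide : Q₂ * Q₁ = E13) ▸ (mul_mem hQ2 hQ1)
  have hE14 : E14 ∈ C := (by decide : S₁ * S₁ * S₁ = E14) ▸ (mul_mem (mul_mem hS1 hS1) hS1)
  have hE15 : E15 ∈ C := (by decide : S₁ * S₁ * S₂ = E15) ▸ (mul_mem (mul_mem hS1 hS1) hS2)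
  have hE16 : E16 ∈ C := (by decide : S₁ * S₁ * Q₁ = E16) ▸ (mul_mem (mul_mem hS1 hS1) hQ1)
  have hE17 : E17 ∈ C := (by decide : S₁ * S₁ * Q₂ = E17) ▸ (mul_mem (mul_mem hS1 hS1) hQ2)
  have hE18 : E18 ∈ C := (by decide : S₁ * S₂ * S₂ = E18) ▸ (mul_mem (mul_mem hS1 hS2) hS2)
  have hE19 : E19 ∈ C := (by decide : S₁ * S₂ * Q₂ = E19) ▸ (mul_mem (mul_mem hS1 hS2) hQ2)
  have hE20 : E20 ∈ C := (by decide : S₁ * Q₁ * Q₁ = E20) ▸ (mul_mem (mul_mem hS1 hQ1) hQ1)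
  have hE21 : E21 ∈ C := (by decide : S₁ * Q₂ * Q₁ = E21) ▸ (mul_mem (mul_mem hS1 hQ2) hQ1)
  have hE22 : E22 ∈ C := (by decide : S₂ * S₂ * S₂ = E22) ▸ (mul_mem (mul_mem hS2 hS2) hS2)
  have hE23 : E23 ∈ C := (by decide : S₂ * S₂ * Q₂ = E23) ▸ (mul_mem (mul_mem hS2 hS2) hQ2)
  have hE24 : E24 ∈ C := (by decide : Q₁ * Q₁ * Q₁ = E24) ▸ (mul_mem (mul_mem hQ1 hQ1) hQ1)
  have hE25 : E25 ∈ C := (by decide : Q₁ * Q₁ * Q₂ = E25) ▸ (mul_mem (mul_mem hQ1 hQ1) hQ2)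
  have hE26 : E26 ∈ C := (by decide : S₁ * S₁ * S₁ * Q₁ = E26) ▸ (mul_mem (mul_mem (mul_mem hS1 hS1) hS1) hQ1)
  have hE27 : E27 ∈ C := (by decide : S₁ * S₁ * S₁ * Q₂ = E27) ▸ (mul_mem (mul_mem (mul_mem hS1 hS1) hS1) hQ2)
  have hE28 : E28 ∈ C := (by decide : S₁ * S₁ * S₂ * Q₂ = E28) ▸ (mul_mem (mul_mem (mul_mem hS1 hS1) hS2) hQ2)
  have hE29 : E29 ∈ C := (by decide : S₁ * S₁ * Q₂ * Q₁ = E29) ▸ (mul_mem (mul_mem (mul_mem hS1 hS1) hQ2) hQ1)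
  have hE30 : E30 ∈ C := (by decide : S₁ * S₂ * S₂ * Q₂ = E30) ▸ (mul_mem (mul_mem (mul_mem hS1 hS2) hS2) hQ2)
  have hE31 : E31 ∈ C := (by decide : S₁ * Q₁ * Q₁ * Q₂ = E31) ▸ (mul_mem (mul_mem (mul_mem hS1 hQ1) hQ1) hQ2)
  simp only [GL32, List.mem_cons, List.not_mem_nil, or_false] at hx
  rcases hx with rfl|rfl|rfl|rfl|rfl|rfl|rfl|rfl|rfl|rfl|rfl|rfl|rfl|rfl|rfl|rfl|rfl|rfl|rfl|rfl|rfl|rfl|rfl|rfl|rfl|rfl|rfl|rfl|rfl|rfl|rfl|rfl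
  exacts [hE0, hE1, hE2, hE3, hE4, hE5, hE6, hE7, hE8, hE9, hE10, hE11, hE12, hE13, hE14, hE15, hE16, hE17, hE18, hE19, hE20, hE21, hE22, hE23, hE24, hE25, hE26, hE27, hE28, hE29, hE30, hE31]


set_option maxHeartbeats 2000000 in
lemma inv_exists : ∀ a ∈ GL32, ∃ b ∈ GL32, a * b = 1 ∧ b * a = 1 := by decide

lemma closure_set_eq :
    (Submonoid.closure ({S₁, S₂, Q₁, Q₂} : Set (Matrix (Fin 4) (Fin 4) ℤ)) :
      Set (Matrix (Fin 4) (Fin 4) ℤ)) = ↑GL32.toFinset := by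
  ext x
  simp only [SetLike.mem_coe, Finset.coe_sort_coe, Finset.mem_coe, List.mem_toFinset]
  exact ⟨mem_GL32_of_mem_closure x, mem_closure_of_mem_GL32 x⟩

/-- **The elliptic point group `𝔓₃₂`.**
`S₁, S₂, Q₁, Q₂ ∈ Sp(4,ℤ)`, and the subgroup they generate (here: the closure as a
monoid, which is a group since every element has a two-sided inverse in it) is finite of
order exactly `32`. -/
theorem stmt_15 :
    S₁ᵀ * OmegaZ * S₁ = OmegaZ ∧ S₂ᵀ * OmegaZ * S₂ = OmegaZ ∧
    Q₁ᵀ * OmegaZ * Q₁ = OmegaZ ∧ Q₂ᵀ * OmegaZ * Q₂ = OmegaZ ∧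
    (∀ x ∈ Submonoid.closure ({S₁, S₂, Q₁, Q₂} : Set (Matrix (Fin 4) (Fin 4) ℤ)),
      ∃ y ∈ Submonoid.closure ({S₁, S₂, Q₁, Q₂} : Set (Matrix (Fin 4) (Fin 4) ℤ)),
        x * y = 1 ∧ y * x = 1) ∧
    (Submonoid.closure ({S₁, S₂, Q₁, Q₂} : Set (Matrix (Fin 4) (Fin 4) ℤ)) :
      Set (Matrix (Fin 4) (Fin 4) ℤ)).Finite ∧
    Nat.card (Submonoid.closure ({S₁, S₂, Q₁, Q₂} : Set (Matrix (Fin 4) (Fin 4) ℤ))) = 32 := by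
  
  refine ⟨by decide, by decide, by decide, by decide, ?_, ?_, ?_⟩
  · intro x hx
    obtain ⟨y, hyG, hy1, hy2⟩ := inv_exists x (mem_GL32_of_mem_closure x hx)
    exact ⟨y, mem_closure_of_mem_GL32 y hyG, hy1, hy2⟩
  · rw [closure_set_eq]
    exact GL32.toFinset.finite_toSet
  · rw [← SetLike.coe_sort_coe, closure_set_eq, Nat.card_coe_set_eq, Set.ncard_coe_finset]
    decide
end

section
/- Let 𝔓 ≤ GL(4,ℤ) be the subgroup generated by {S₁, S₂, Q₁, Q₂}, let 𝔗 be the subgroup generated by {T₁,…,T₈}, and let Δ be the subgroup generated by {S₁, S₂, Q₁, Q₂, T₁,…,T₈}. Then: (i) for every g ∈ Δ and every t ∈ 𝔗 one has g·t·g⁻¹ ∈ 𝔗, i.e. 𝔗 is a normal subgroup of Δ; and (ii) every element g ∈ Δ admits a factorization g = γ·t with γ ∈ 𝔓 and t ∈ 𝔗. -/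
open Matrix

/-- `T₅ = I₄ − E₂₁ + E₃₄`. -/
def T₅ : Matrix (Fin 4) (Fin 4) ℤ := !![1, 0, 0, 0; -1, 1, 0, 0; 0, 0, 1, 1; 0, 0, 0, 1]

/-- `T₆ = I₄ − E₃₁`. -/
def T₆ : Matrix (Fin 4) (Fin 4) ℤ := !![1, 0, 0, 0; 0, 1, 0, 0; -1, 0, 1, 0; 0, 0, 0, 1]

/-- `T₇ = I₄ − E₃₂ − E₄₁`. -/
def T₇ : Matrix (Fin 4) (Fin 4) ℤ := !![1, 0, 0, 0; 0, 1, 0, 0; 0, -1, 1, 0; -1, 0, 0, 1]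

/-- `T₈ = I₄ − E₄₂`. -/
def T₈ : Matrix (Fin 4) (Fin 4) ℤ := !![1, 0, 0, 0; 0, 1, 0, 0; 0, 0, 1, 0; 0, -1, 0, 1]

/-- Generating set of the elliptic point group `𝔓`. -/
def Pgens : Set (Matrix (Fin 4) (Fin 4) ℤ) := {S₁, S₂, Q₁, Q₂}

/-- Generating set of the parabolic normal subgroup `𝔗`. -/
def Tgens : Set (Matrix (Fin 4) (Fin 4) ℤ) := {T₁, T₂, T₃, T₄, T₅, T₆, T₇, T₈}

private def T₁inv : Matrix (Fin 4) (Fin 4) ℤ := !![1, 0, -1, 0; 0, 1, 0, 0; 0, 0, 1, 0; 0, 0, 0, 1]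
private def T₂inv : Matrix (Fin 4) (Fin 4) ℤ := !![1, 0, 0, 0; 0, 1, 0, -1; 0, 0, 1, 0; 0, 0, 0, 1]
private def T₃inv : Matrix (Fin 4) (Fin 4) ℤ := !![1, 0, 0, -1; 0, 1, -1, 0; 0, 0, 1, 0; 0, 0, 0, 1]
private def T₄inv : Matrix (Fin 4) (Fin 4) ℤ := !![1, -1, 0, 0; 0, 1, 0, 0; 0, 0, 1, 0; 0, 0, 1, 1]
private def T₅inv : Matrix (Fin 4) (Fin 4) ℤ := !![1, 0, 0, 0; 1, 1, 0, 0; 0, 0, 1, -1; 0, 0, 0, 1]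
private def T₆inv : Matrix (Fin 4) (Fin 4) ℤ := !![1, 0, 0, 0; 0, 1, 0, 0; 1, 0, 1, 0; 0, 0, 0, 1]
private def T₇inv : Matrix (Fin 4) (Fin 4) ℤ := !![1, 0, 0, 0; 0, 1, 0, 0; 0, 1, 1, 0; 1, 0, 0, 1]
private def T₈inv : Matrix (Fin 4) (Fin 4) ℤ := !![1, 0, 0, 0; 0, 1, 0, 0; 0, 0, 1, 0; 0, 1, 0, 1]
private def S₁inv : Matrix (Fin 4) (Fin 4) ℤ := !![0, 0, -1, 0; 0, 1, 0, 0; 1, 0, 0, 0; 0, 0, 0, 1]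
private def S₂inv : Matrix (Fin 4) (Fin 4) ℤ := !![1, 0, 0, 0; 0, 0, 0, -1; 0, 0, 1, 0; 0, 1, 0, 0]
private def Q₁inv : Matrix (Fin 4) (Fin 4) ℤ := !![0, 1, 0, 0; -1, 0, 0, 0; 0, 0, 0, 1; 0, 0, -1, 0]
private def Q₂inv : Matrix (Fin 4) (Fin 4) ℤ := !![0, 0, 0, -1; 0, 0, -1, 0; 0, 1, 0, 0; 1, 0, 0, 0]

private lemma mT1 : T₁ ∈ Submonoid.closure Tgens := Submonoid.subset_closure (by simp [Tgens])
private lemma mT2 : T₂ ∈ Submonoid.closure Tgens := Submonoid.subset_closure (by simp [Tgens])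
private lemma mT3 : T₃ ∈ Submonoid.closure Tgens := Submonoid.subset_closure (by simp [Tgens])
private lemma mT4 : T₄ ∈ Submonoid.closure Tgens := Submonoid.subset_closure (by simp [Tgens])
private lemma mT5 : T₅ ∈ Submonoid.closure Tgens := Submonoid.subset_closure (by simp [Tgens])
private lemma mT6 : T₆ ∈ Submonoid.closure Tgens := Submonoid.subset_closure (by simp [Tgens])
private lemma mT7 : T₇ ∈ Submonoid.closure Tgens := Submonoid.subset_closure (by simp [Tgens])
private lemma mT8 : T₈ ∈ Submonoid.closure Tgens := Submonoid.subset_closure (by simp [Tgens])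
private lemma mT1i : T₁inv ∈ Submonoid.closure Tgens := by
  rw [show T₁inv = T₁ * T₁ * T₁ * T₆ * T₁ * T₁ * T₆ * T₆ * T₁ * T₁ * T₆ by decide]
  exact (mul_mem (mul_mem (mul_mem (mul_mem (mul_mem (mul_mem (mul_mem (mul_mem (mul_mem (mul_mem mT1 mT1) mT1) mT6) mT1) mT1) mT6) mT6) mT1) mT1) mT6)
private lemma mT2i : T₂inv ∈ Submonoid.closure Tgens := by
  rw [show T₂inv = T₂ * T₂ * T₂ * T₈ * T₂ * T₂ * T₈ * T₈ * T₂ * T₂ * T₈ by decide]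
  exact (mul_mem (mul_mem (mul_mem (mul_mem (mul_mem (mul_mem (mul_mem (mul_mem (mul_mem (mul_mem mT2 mT2) mT2) mT8) mT2) mT2) mT8) mT8) mT2) mT2) mT8)
private lemma mT3i : T₃inv ∈ Submonoid.closure Tgens := by
  rw [show T₃inv = T₃ * T₃ * T₃ * T₇ * T₃ * T₃ * T₇ * T₇ * T₃ * T₃ * T₇ by decide]
  exact (mul_mem (mul_mem (mul_mem (mul_mem (mul_mem (mul_mem (mul_mem (mul_mem (mul_mem (mul_mem mT3 mT3) mT3) mT7) mT3) mT3) mT7) mT7) mT3) mT3) mT7)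
private lemma mT4i : T₄inv ∈ Submonoid.closure Tgens := by
  rw [show T₄inv = T₄ * T₄ * T₄ * T₅ * T₄ * T₄ * T₅ * T₅ * T₄ * T₄ * T₅ by decide]
  exact (mul_mem (mul_mem (mul_mem (mul_mem (mul_mem (mul_mem (mul_mem (mul_mem (mul_mem (mul_mem mT4 mT4) mT4) mT5) mT4) mT4) mT5) mT5) mT4) mT4) mT5)
private lemma mT5i : T₅inv ∈ Submonoid.closure Tgens := by
  rw [show T₅inv = T₄ * T₄ * T₄ * T₄ * T₅ * T₄ * T₄ * T₅ * T₅ * T₄ * T₄ by decide]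
  exact (mul_mem (mul_mem (mul_mem (mul_mem (mul_mem (mul_mem (mul_mem (mul_mem (mul_mem (mul_mem mT4 mT4) mT4) mT4) mT5) mT4) mT4) mT5) mT5) mT4) mT4)
private lemma mT6i : T₆inv ∈ Submonoid.closure Tgens := by
  rw [show T₆inv = T₁ * T₁ * T₁ * T₁ * T₆ * T₁ * T₁ * T₆ * T₆ * T₁ * T₁ by decide]
  exact (mul_mem (mul_mem (mul_mem (mul_mem (mul_mem (mul_mem (mul_mem (mul_mem (mul_mem (mul_mem mT1 mT1) mT1) mT1) mT6) mT1) mT1) mT6) mT6) mT1) mT1)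
private lemma mT7i : T₇inv ∈ Submonoid.closure Tgens := by
  rw [show T₇inv = T₃ * T₃ * T₃ * T₃ * T₇ * T₃ * T₃ * T₇ * T₇ * T₃ * T₃ by decide]
  exact (mul_mem (mul_mem (mul_mem (mul_mem (mul_mem (mul_mem (mul_mem (mul_mem (mul_mem (mul_mem mT3 mT3) mT3) mT3) mT7) mT3) mT3) mT7) mT7) mT3) mT3)
private lemma mT8i : T₈inv ∈ Submonoid.closure Tgens := by
  rw [show T₈inv = T₂ * T₂ * T₂ * T₂ * T₈ * T₂ * T₂ * T₈ * T₈ * T₂ * T₂ by decide]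
  exact (mul_mem (mul_mem (mul_mem (mul_mem (mul_mem (mul_mem (mul_mem (mul_mem (mul_mem (mul_mem mT2 mT2) mT2) mT2) mT8) mT2) mT2) mT8) mT8) mT2) mT2)

private lemma sT1 : T₁ * T₁inv = 1 ∧ T₁inv * T₁ = 1 := by constructor <;> decide
private lemma sT2 : T₂ * T₂inv = 1 ∧ T₂inv * T₂ = 1 := by constructor <;> decide
private lemma sT3 : T₃ * T₃inv = 1 ∧ T₃inv * T₃ = 1 := by constructor <;> decide
private lemma sT4 : T₄ * T₄inv = 1 ∧ T₄inv * T₄ = 1 := by constructor <;> decide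
private lemma sT5 : T₅ * T₅inv = 1 ∧ T₅inv * T₅ = 1 := by constructor <;> decide
private lemma sT6 : T₆ * T₆inv = 1 ∧ T₆inv * T₆ = 1 := by constructor <;> decide
private lemma sT7 : T₇ * T₇inv = 1 ∧ T₇inv * T₇ = 1 := by constructor <;> decide
private lemma sT8 : T₈ * T₈inv = 1 ∧ T₈inv * T₈ = 1 := by constructor <;> decide
private lemma sS1 : S₁ * S₁inv = 1 ∧ S₁inv * S₁ = 1 := by constructor <;> decide
private lemma sS2 : S₂ * S₂inv = 1 ∧ S₂inv * S₂ = 1 := by constructor <;> decide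
private lemma sQ1 : Q₁ * Q₁inv = 1 ∧ Q₁inv * Q₁ = 1 := by constructor <;> decide
private lemma sQ2 : Q₂ * Q₂inv = 1 ∧ Q₂inv * Q₂ = 1 := by constructor <;> decide

private lemma conjS₁ : ∀ s ∈ Tgens, S₁ * s * S₁inv ∈ Submonoid.closure Tgens := by
  intro s hs
  simp only [Tgens, Set.mem_insert_iff, Set.mem_singleton_iff] at hs
  rcases hs with rfl|rfl|rfl|rfl|rfl|rfl|rfl|rfl
  · rw [show S₁ * T₁ * S₁inv = T₆ by decide]; exact mT6
  · rw [show S₁ * T₂ * S₁inv = T₂ by decide]; exact mT2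
  · rw [show S₁ * T₃ * S₁inv = T₅inv by decide]; exact mT5i
  · rw [show S₁ * T₄ * S₁inv = T₇ by decide]; exact mT7
  · rw [show S₁ * T₅ * S₁inv = T₃ by decide]; exact mT3
  · rw [show S₁ * T₆ * S₁inv = T₁ by decide]; exact mT1
  · rw [show S₁ * T₇ * S₁inv = T₄inv by decide]; exact mT4i
  · rw [show S₁ * T₈ * S₁inv = T₈ by decide]; exact mT8

private lemma conjS₁i : ∀ s ∈ Tgens, S₁inv * s * S₁ ∈ Submonoid.closure Tgens := by
  intro s hs
  simp only [Tgens, Set.mem_insert_iff, Set.mem_singleton_iff] at hs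
  rcases hs with rfl|rfl|rfl|rfl|rfl|rfl|rfl|rfl
  · rw [show S₁inv * T₁ * S₁ = T₆ by decide]; exact mT6
  · rw [show S₁inv * T₂ * S₁ = T₂ by decide]; exact mT2
  · rw [show S₁inv * T₃ * S₁ = T₅ by decide]; exact mT5
  · rw [show S₁inv * T₄ * S₁ = T₇inv by decide]; exact mT7i
  · rw [show S₁inv * T₅ * S₁ = T₃inv by decide]; exact mT3i
  · rw [show S₁inv * T₆ * S₁ = T₁ by decide]; exact mT1
  · rw [show S₁inv * T₇ * S₁ = T₄ by decide]; exact mT4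
  · rw [show S₁inv * T₈ * S₁ = T₈ by decide]; exact mT8

private lemma conjS₂ : ∀ s ∈ Tgens, S₂ * s * S₂inv ∈ Submonoid.closure Tgens := by
  intro s hs
  simp only [Tgens, Set.mem_insert_iff, Set.mem_singleton_iff] at hs
  rcases hs with rfl|rfl|rfl|rfl|rfl|rfl|rfl|rfl
  · rw [show S₂ * T₁ * S₂inv = T₁ by decide]; exact mT1
  · rw [show S₂ * T₂ * S₂inv = T₈ by decide]; exact mT8
  · rw [show S₂ * T₃ * S₂inv = T₄ by decide]; exact mT4
  · rw [show S₂ * T₄ * S₂inv = T₃inv by decide]; exact mT3i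
  · rw [show S₂ * T₅ * S₂inv = T₇inv by decide]; exact mT7i
  · rw [show S₂ * T₆ * S₂inv = T₆ by decide]; exact mT6
  · rw [show S₂ * T₇ * S₂inv = T₅ by decide]; exact mT5
  · rw [show S₂ * T₈ * S₂inv = T₂ by decide]; exact mT2

private lemma conjS₂i : ∀ s ∈ Tgens, S₂inv * s * S₂ ∈ Submonoid.closure Tgens := by
  intro s hs
  simp only [Tgens, Set.mem_insert_iff, Set.mem_singleton_iff] at hs
  rcases hs with rfl|rfl|rfl|rfl|rfl|rfl|rfl|rfl
  · rw [show S₂inv * T₁ * S₂ = T₁ by decide]; exact mT1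
  · rw [show S₂inv * T₂ * S₂ = T₈ by decide]; exact mT8
  · rw [show S₂inv * T₃ * S₂ = T₄inv by decide]; exact mT4i
  · rw [show S₂inv * T₄ * S₂ = T₃ by decide]; exact mT3
  · rw [show S₂inv * T₅ * S₂ = T₇ by decide]; exact mT7
  · rw [show S₂inv * T₆ * S₂ = T₆ by decide]; exact mT6
  · rw [show S₂inv * T₇ * S₂ = T₅inv by decide]; exact mT5i
  · rw [show S₂inv * T₈ * S₂ = T₂ by decide]; exact mT2

private lemma conjQ₁ : ∀ s ∈ Tgens, Q₁ * s * Q₁inv ∈ Submonoid.closure Tgens := by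
  intro s hs
  simp only [Tgens, Set.mem_insert_iff, Set.mem_singleton_iff] at hs
  rcases hs with rfl|rfl|rfl|rfl|rfl|rfl|rfl|rfl
  · rw [show Q₁ * T₁ * Q₁inv = T₂ by decide]; exact mT2
  · rw [show Q₁ * T₂ * Q₁inv = T₁ by decide]; exact mT1
  · rw [show Q₁ * T₃ * Q₁inv = T₃inv by decide]; exact mT3i
  · rw [show Q₁ * T₄ * Q₁inv = T₅ by decide]; exact mT5
  · rw [show Q₁ * T₅ * Q₁inv = T₄ by decide]; exact mT4
  · rw [show Q₁ * T₆ * Q₁inv = T₈ by decide]; exact mT8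
  · rw [show Q₁ * T₇ * Q₁inv = T₇inv by decide]; exact mT7i
  · rw [show Q₁ * T₈ * Q₁inv = T₆ by decide]; exact mT6

private lemma conjQ₁i : ∀ s ∈ Tgens, Q₁inv * s * Q₁ ∈ Submonoid.closure Tgens := by
  intro s hs
  simp only [Tgens, Set.mem_insert_iff, Set.mem_singleton_iff] at hs
  rcases hs with rfl|rfl|rfl|rfl|rfl|rfl|rfl|rfl
  · rw [show Q₁inv * T₁ * Q₁ = T₂ by decide]; exact mT2
  · rw [show Q₁inv * T₂ * Q₁ = T₁ by decide]; exact mT1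
  · rw [show Q₁inv * T₃ * Q₁ = T₃inv by decide]; exact mT3i
  · rw [show Q₁inv * T₄ * Q₁ = T₅ by decide]; exact mT5
  · rw [show Q₁inv * T₅ * Q₁ = T₄ by decide]; exact mT4
  · rw [show Q₁inv * T₆ * Q₁ = T₈ by decide]; exact mT8
  · rw [show Q₁inv * T₇ * Q₁ = T₇inv by decide]; exact mT7i
  · rw [show Q₁inv * T₈ * Q₁ = T₆ by decide]; exact mT6

private lemma conjQ₂ : ∀ s ∈ Tgens, Q₂ * s * Q₂inv ∈ Submonoid.closure Tgens := by
  intro s hs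
  simp only [Tgens, Set.mem_insert_iff, Set.mem_singleton_iff] at hs
  rcases hs with rfl|rfl|rfl|rfl|rfl|rfl|rfl|rfl
  · rw [show Q₂ * T₁ * Q₂inv = T₈ by decide]; exact mT8
  · rw [show Q₂ * T₂ * Q₂inv = T₆ by decide]; exact mT6
  · rw [show Q₂ * T₃ * Q₂inv = T₇ by decide]; exact mT7
  · rw [show Q₂ * T₄ * Q₂inv = T₄inv by decide]; exact mT4i
  · rw [show Q₂ * T₅ * Q₂inv = T₅inv by decide]; exact mT5i
  · rw [show Q₂ * T₆ * Q₂inv = T₂ by decide]; exact mT2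
  · rw [show Q₂ * T₇ * Q₂inv = T₃ by decide]; exact mT3
  · rw [show Q₂ * T₈ * Q₂inv = T₁ by decide]; exact mT1

private lemma conjQ₂i : ∀ s ∈ Tgens, Q₂inv * s * Q₂ ∈ Submonoid.closure Tgens := by
  intro s hs
  simp only [Tgens, Set.mem_insert_iff, Set.mem_singleton_iff] at hs
  rcases hs with rfl|rfl|rfl|rfl|rfl|rfl|rfl|rfl
  · rw [show Q₂inv * T₁ * Q₂ = T₈ by decide]; exact mT8
  · rw [show Q₂inv * T₂ * Q₂ = T₆ by decide]; exact mT6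
  · rw [show Q₂inv * T₃ * Q₂ = T₇ by decide]; exact mT7
  · rw [show Q₂inv * T₄ * Q₂ = T₄inv by decide]; exact mT4i
  · rw [show Q₂inv * T₅ * Q₂ = T₅inv by decide]; exact mT5i
  · rw [show Q₂inv * T₆ * Q₂ = T₂ by decide]; exact mT2
  · rw [show Q₂inv * T₇ * Q₂ = T₃ by decide]; exact mT3
  · rw [show Q₂inv * T₈ * Q₂ = T₁ by decide]; exact mT1


private lemma conj_closure {g gi : Matrix (Fin 4) (Fin 4) ℤ} (h1 : g * gi = 1) (h2 : gi * g = 1)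
    (hb : ∀ s ∈ Tgens, g * s * gi ∈ Submonoid.closure Tgens) :
    ∀ t ∈ Submonoid.closure Tgens, g * t * gi ∈ Submonoid.closure Tgens := by
  intro t ht
  induction ht using Submonoid.closure_induction with
  | mem x hx => exact hb x hx
  | one => rw [mul_one, h1]; exact one_mem _
  | mul x y hx hy ihx ihy =>
      have e : (g * x * gi) * (g * y * gi) = g * (x * y) * gi := by
        simp only [mul_assoc]
        rw [← mul_assoc gi g, h2, one_mul]
      exact e ▸ mul_mem ihx ihy

private lemma key : ∀ g ∈ Submonoid.closure (Pgens ∪ Tgens),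
    ∃ gi : Matrix (Fin 4) (Fin 4) ℤ, g * gi = 1 ∧ gi * g = 1 ∧
      (∀ t ∈ Submonoid.closure Tgens, g * t * gi ∈ Submonoid.closure Tgens) ∧
      (∀ t ∈ Submonoid.closure Tgens, gi * t * g ∈ Submonoid.closure Tgens) := by
  intro g hg
  induction hg using Submonoid.closure_induction with
  | mem x hx =>
      simp only [Set.mem_union] at hx
      rcases hx with hx | hx
      · simp only [Pgens, Set.mem_insert_iff, Set.mem_singleton_iff] at hx
        rcases hx with rfl | rfl | rfl | rfl
        · exact ⟨S₁inv, sS1.1, sS1.2, conj_closure sS1.1 sS1.2 conjS₁,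
            conj_closure sS1.2 sS1.1 conjS₁i⟩
        · exact ⟨S₂inv, sS2.1, sS2.2, conj_closure sS2.1 sS2.2 conjS₂,
            conj_closure sS2.2 sS2.1 conjS₂i⟩
        · exact ⟨Q₁inv, sQ1.1, sQ1.2, conj_closure sQ1.1 sQ1.2 conjQ₁,
            conj_closure sQ1.2 sQ1.1 conjQ₁i⟩
        · exact ⟨Q₂inv, sQ2.1, sQ2.2, conj_closure sQ2.1 sQ2.2 conjQ₂,
            conj_closure sQ2.2 sQ2.1 conjQ₂i⟩
      · simp only [Tgens, Set.mem_insert_iff, Set.mem_singleton_iff] at hx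
        rcases hx with rfl | rfl | rfl | rfl | rfl | rfl | rfl | rfl
        · exact ⟨T₁inv, sT1.1, sT1.2, fun t ht => mul_mem (mul_mem mT1 ht) mT1i,
            fun t ht => mul_mem (mul_mem mT1i ht) mT1⟩
        · exact ⟨T₂inv, sT2.1, sT2.2, fun t ht => mul_mem (mul_mem mT2 ht) mT2i,
            fun t ht => mul_mem (mul_mem mT2i ht) mT2⟩
        · exact ⟨T₃inv, sT3.1, sT3.2, fun t ht => mul_mem (mul_mem mT3 ht) mT3i,
            fun t ht => mul_mem (mul_mem mT3i ht) mT3⟩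
        · exact ⟨T₄inv, sT4.1, sT4.2, fun t ht => mul_mem (mul_mem mT4 ht) mT4i,
            fun t ht => mul_mem (mul_mem mT4i ht) mT4⟩
        · exact ⟨T₅inv, sT5.1, sT5.2, fun t ht => mul_mem (mul_mem mT5 ht) mT5i,
            fun t ht => mul_mem (mul_mem mT5i ht) mT5⟩
        · exact ⟨T₆inv, sT6.1, sT6.2, fun t ht => mul_mem (mul_mem mT6 ht) mT6i,
            fun t ht => mul_mem (mul_mem mT6i ht) mT6⟩
        · exact ⟨T₇inv, sT7.1, sT7.2, fun t ht => mul_mem (mul_mem mT7 ht) mT7i,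
            fun t ht => mul_mem (mul_mem mT7i ht) mT7⟩
        · exact ⟨T₈inv, sT8.1, sT8.2, fun t ht => mul_mem (mul_mem mT8 ht) mT8i,
            fun t ht => mul_mem (mul_mem mT8i ht) mT8⟩
  | one =>
      exact ⟨1, one_mul 1, one_mul 1, fun t ht => by simpa using ht,
        fun t ht => by simpa using ht⟩
  | mul x y hx hy ihx ihy =>
      obtain ⟨xi, hx1, hx2, hxf, hxb⟩ := ihx
      obtain ⟨yi, hy1, hy2, hyf, hyb⟩ := ihy
      refine ⟨yi * xi, ?_, ?_, ?_, ?_⟩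
      · rw [show x * y * (yi * xi) = x * ((y * yi) * xi) by simp only [mul_assoc], hy1,
          one_mul, hx1]
      · rw [show yi * xi * (x * y) = yi * ((xi * x) * y) by simp only [mul_assoc], hx2,
          one_mul, hy2]
      · intro t ht
        rw [show x * y * t * (yi * xi) = x * (y * t * yi) * xi by simp only [mul_assoc]]
        exact hxf _ (hyf t ht)
      · intro t ht
        rw [show yi * xi * t * (x * y) = yi * (xi * t * x) * y by simp only [mul_assoc]]
        exact hyb _ (hxb t ht)

/-- **Structure of the discrete group `Δ₍₃₂,₈₎ = 𝔓₃₂ ⋉ 𝔗`.**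
Let `𝔓`, `𝔗` and `Δ` be generated by `{S₁,S₂,Q₁,Q₂}`, `{T₁,…,T₈}` and their union.
Then (i) `g·t·g⁻¹ ∈ 𝔗` for all `g ∈ Δ`, `t ∈ 𝔗` (so `𝔗 ⊴ Δ`); and (ii) every `g ∈ Δ`
factors as `g = γ·t` with `γ ∈ 𝔓` and `t ∈ 𝔗`. -/
theorem stmt_16 :
    (∀ g ∈ Submonoid.closure (Pgens ∪ Tgens), ∀ t ∈ Submonoid.closure Tgens,
      g * t * g⁻¹ ∈ Submonoid.closure Tgens) ∧
    (∀ g ∈ Submonoid.closure (Pgens ∪ Tgens),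
      ∃ γ ∈ Submonoid.closure Pgens, ∃ t ∈ Submonoid.closure Tgens, g = γ * t) := by
  constructor
  · intro g hg t ht
    obtain ⟨gi, h1, _, hfwd, _⟩ := key g hg
    rw [Matrix.inv_eq_right_inv h1]
    exact hfwd t ht
  · intro g hg
    induction hg using Submonoid.closure_induction with
    | mem x hx =>
        simp only [Set.mem_union] at hx
        rcases hx with hx | hx
        · exact ⟨x, Submonoid.subset_closure hx, 1, one_mem _, (mul_one x).symm⟩
        · exact ⟨1, one_mem _, x, Submonoid.subset_closure hx, (one_mul x).symm⟩
    | one => exact ⟨1, one_mem _, 1, one_mem _, (one_mul 1).symm⟩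
    | mul x y hx hy ihx ihy =>
        obtain ⟨γ₁, hγ₁, t₁, ht₁, rfl⟩ := ihx
        obtain ⟨γ₂, hγ₂, t₂, ht₂, rfl⟩ := ihy
        obtain ⟨gi, h1, h2, hfwd, hbwd⟩ :=
          key γ₂ (Submonoid.closure_mono Set.subset_union_left hγ₂)
        refine ⟨γ₁ * γ₂, mul_mem hγ₁ hγ₂, (gi * t₁ * γ₂) * t₂,
          mul_mem (hbwd t₁ ht₁) ht₂, ?_⟩
        simp only [mul_assoc]
        rw [show γ₂ * (gi * (t₁ * (γ₂ * t₂))) = t₁ * (γ₂ * t₂) by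
          rw [← mul_assoc, h1, one_mul]]
end
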